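/- arXiv:1510.04487 — 7 statements merged into one kernel-verified Lean document; each statement's English description precedes it below -/
import Mathlib

section
/- Let X be an additive commutative topological group whose topology is T₁ and locally convex (i.e., has a basis of open sets that are convex in the monoid sense). Then every singleton {x} is a convex subset of X, and every element x ≠ 0 has infinite order, i.e., n•x ≠ 0 for every positive integer n. -/
/-- A subset `A` of an additive commutative monoid is convex (in the monoid sense) if
whenever `m • x = m₁ • x₁ + ⋯ + mₙ • xₙ` with `xᵢ ∈ A`, positive integers `mᵢ`
and `m = m₁ + ⋯ + mₙ`, then `x ∈ A`. -/
def MConvex {X : Type*} [AddCommMonoid X] (A : Set X) : Prop :=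
  ∀ (n : ℕ), 0 < n → ∀ (x : X) (xs : Fin n → X) (ms : Fin n → ℕ),
    (∀ i, xs i ∈ A) → (∀ i, 0 < ms i) →
    (∑ i, ms i) • x = ∑ i, ms i • xs i → x ∈ A

/-- A topological additive commutative monoid is locally convex if its topology has a basis
consisting of convex sets. -/
def LocallyMConvex (X : Type*) [AddCommMonoid X] [TopologicalSpace X] : Prop :=
  ∃ B : Set (Set X), TopologicalSpace.IsTopologicalBasis B ∧ ∀ U ∈ B, MConvex U

theorem mconvex_iInter {X : Type*} [AddCommMonoid X] {ι : Sort*} {s : ι → Set X}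
    (h : ∀ i, MConvex (s i)) : MConvex (⋂ i, s i) :=
  fun n hn x xs ms hxs hms hsum ↦
    Set.mem_iInter.2 fun i ↦ h i n hn x xs ms (fun j ↦ Set.mem_iInter.1 (hxs j) i) hms hsum

theorem mconvex_iInter₂ {X : Type*} [AddCommMonoid X] {ι : Sort*} {κ : ι → Sort*}
    {s : ∀ i, κ i → Set X} (h : ∀ i j, MConvex (s i j)) : MConvex (⋂ (i) (j), s i j) :=
  mconvex_iInter fun i ↦ mconvex_iInter (h i)

/-- In a `T₁` space the basic neighbourhoods of `x` intersect to `{x}`. -/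
theorem LocallyMConvex.mconvex_singleton {X : Type*} [AddCommMonoid X] [TopologicalSpace X]
    [T1Space X] (hlc : LocallyMConvex X) (x : X) : MConvex ({x} : Set X) := by
  obtain ⟨B, hB, hBconv⟩ := hlc
  rw [← biInter_basis_nhds (hB.nhds_hasBasis (a := x))]
  exact mconvex_iInter₂ fun U hU ↦ hBconv U hU.1

theorem MConvex.eq_of_nsmul_eq {X : Type*} [AddCommMonoid X] {a : X}
    (ha : MConvex ({a} : Set X)) {n : ℕ} (hn : 0 < n) {x : X} (h : n • x = n • a) : x = a :=
  ha 1 one_pos x (fun _ ↦ a) (fun _ ↦ n) (fun _ ↦ rfl) (fun _ ↦ hn) (by simpa using h)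

theorem singletons_convex_and_no_finite_order_general
    {X : Type*} [AddCommGroup X] [TopologicalSpace X]
    [T1Space X] (hlc : LocallyMConvex X) :
    (∀ x : X, MConvex ({x} : Set X)) ∧
      (∀ x : X, x ≠ 0 → ∀ n : ℕ, 0 < n → n • x ≠ 0) :=
  ⟨hlc.mconvex_singleton, fun x hx n hn hnx ↦
    hx <| (hlc.mconvex_singleton 0).eq_of_nsmul_eq hn (by rw [hnx, nsmul_zero])⟩

theorem singletons_convex_and_no_finite_order
    {X : Type*} [AddCommGroup X] [TopologicalSpace X] [IsTopologicalAddGroup X]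
    [T1Space X] (hlc : LocallyMConvex X) :
    (∀ x : X, MConvex ({x} : Set X)) ∧
      (∀ x : X, x ≠ 0 → ∀ n : ℕ, 0 < n → n • x ≠ 0) :=
  singletons_convex_and_no_finite_order_general hlc
end

section
/- Let X be a connected Hausdorff topological additive commutative group and let C ⊆ X be a convex set with 0 in the interior of C. Then the Minkowski functional ρ_C is finite at every point of X and, regarded as a function X → ℝ, is continuous on all of X. -/
/-!
Concatenating representations of `x ∈ (m/l)·C` and `y ∈ (m'/l')·C` represents `x + y` in
`(m/l + m'/l')·C`, so `ρ_C` is subadditive; and `ρ_C z ≤ 1/l` as soon as `l • z ∈ C`, so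
`ρ_C → 0` at `0` when `C` is a neighbourhood of `0`. In a connected group a neighbourhood
of `0` generates everything as a monoid (a symmetric one inside it generates an open, hence
clopen, subgroup), which together with subadditivity makes `ρ_C` finite. Continuity follows
by squeezing: `ρ_C x - ρ_C (-y + x) ≤ ρ_C y ≤ ρ_C x + ρ_C (-x + y)`.
-/

open scoped ENNReal

/-- The rational dilation `(m/l) · C` of a subset `C` of an additive commutative monoid. -/
def ratDil {X : Type*} [AddCommMonoid X] (m l : ℕ) (C : Set X) : Set X :=
  {x : X | ∃ (n : ℕ), 0 < n ∧ ∃ (xs : Fin n → X) (ms : Fin n → ℕ),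
    (∀ i, xs i ∈ C) ∧ (∀ i, 0 < ms i) ∧ (∑ i, ms i) = m ∧ l • x = ∑ i, ms i • xs i}

/-- The Minkowski functional of `C`: `ρ_C x = inf { m/l : x ∈ (m/l) · C } ∈ [0,∞]`,
with value `∞` if no such fraction exists. -/
noncomputable def mink {X : Type*} [AddCommMonoid X] (C : Set X) (x : X) : ℝ≥0∞ :=
  sInf {q : ℝ≥0∞ | ∃ m l : ℕ, 0 < m ∧ 0 < l ∧ x ∈ ratDil m l C ∧ q = (m : ℝ≥0∞) / (l : ℝ≥0∞)}

open Filter Topology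

theorem AddSubmonoid.closure_eq_top_of_mem_nhds_zero {G : Type*} [AddGroup G]
    [TopologicalSpace G] [IsTopologicalAddGroup G] [PreconnectedSpace G] {U : Set G}
    (hU : U ∈ 𝓝 0) : AddSubmonoid.closure U = ⊤ := by
  set H := AddSubgroup.closure (U ∩ -U)
  have hH_open : IsOpen (H : Set G) :=
    H.isOpen_of_mem_nhds (g := 0) <|
      mem_of_superset (inter_mem hU (neg_mem_nhds_zero G hU)) AddSubgroup.subset_closure
  have hH_top : H = ⊤ := AddSubgroup.coe_eq_univ.1 <|
    IsClopen.eq_univ ⟨H.isClosed_of_isOpen hH_open, hH_open⟩ ⟨0, H.zero_mem⟩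
  rw [eq_top_iff, ← AddSubgroup.top_toAddSubmonoid, ← hH_top,
    AddSubgroup.closure_toAddSubmonoid]
  refine AddSubmonoid.closure_mono ?_
  rintro x (hx | hx)
  · exact hx.1
  · simpa using hx.2

theorem continuous_of_subadditive_of_tendsto_zero {G : Type*} [AddGroup G]
    [TopologicalSpace G] [IsTopologicalAddGroup G] {f : G → ℝ}
    (hf : ∀ x y, f (x + y) ≤ f x + f y) (hf0 : Tendsto f (𝓝 0) (𝓝 0)) : Continuous f := by
  refine continuous_iff_continuousAt.2 fun x => ?_
  have h_left : Tendsto (fun y => f x - f (-y + x)) (𝓝 x) (𝓝 (f x)) := by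
    simpa using tendsto_const_nhds.sub
      (hf0.comp ((continuous_neg.add continuous_const).tendsto' x 0 (neg_add_cancel x)))
  have h_right : Tendsto (fun y => f x + f (-x + y)) (𝓝 x) (𝓝 (f x)) := by
    simpa using tendsto_const_nhds.add
      (hf0.comp ((continuous_const.add continuous_id).tendsto' x 0 (neg_add_cancel x)))
  refine tendsto_of_tendsto_of_tendsto_of_le_of_le h_left h_right (fun y => ?_) (fun y => ?_)
  · simpa using hf y (-y + x)
  · simpa using hf x (-x + y)

section AddCommMonoid

variable {X : Type*} [AddCommMonoid X] {C : Set X}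

theorem add_mem_ratDil {m l m' l' : ℕ} (hl : 0 < l) (hl' : 0 < l') {x y : X}
    (hx : x ∈ ratDil m l C) (hy : y ∈ ratDil m' l' C) :
    x + y ∈ ratDil (l' * m + l * m') (l * l') C := by
  obtain ⟨n, hn, xs, ms, hxs, hms, rfl, hx⟩ := hx
  obtain ⟨n', -, ys, ms', hys, hms', rfl, hy⟩ := hy
  refine ⟨n + n', by omega, Fin.append xs ys, Fin.append (l' * ms ·) (l * ms' ·),
    fun i => ?_, fun i => ?_, ?_, ?_⟩
  · exact Fin.addCases (fun j => by simpa using hxs j) (fun j => by simpa using hys j) i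
  · exact Fin.addCases (fun j => by simpa using Nat.mul_pos hl' (hms j))
      (fun j => by simpa using Nat.mul_pos hl (hms' j)) i
  · simp [Fin.sum_univ_add, Finset.mul_sum]
  · have hxy : (l * l') • (x + y) = l' • (l • x) + l • (l' • y) := by
      rw [smul_add, smul_smul, smul_smul, mul_comm l' l]
    simp [Fin.sum_univ_add, hxy, hx, hy, Finset.smul_sum, smul_smul]

theorem mink_le_of_mem_ratDil {m l : ℕ} (hm : 0 < m) (hl : 0 < l) {x : X}
    (hx : x ∈ ratDil m l C) : mink C x ≤ m / l :=
  sInf_le ⟨m, l, hm, hl, hx, rfl⟩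

theorem mink_le_inv_of_nsmul_mem {l : ℕ} (hl : 0 < l) {x : X} (hx : l • x ∈ C) :
    mink C x ≤ (l : ℝ≥0∞)⁻¹ := by
  simpa using mink_le_of_mem_ratDil one_pos hl
    ⟨1, one_pos, fun _ => l • x, fun _ => 1, fun _ => hx, fun _ => one_pos, by simp, by simp⟩

theorem mink_add_le (x y : X) : mink C (x + y) ≤ mink C x + mink C y := by
  conv_rhs => simp only [mink, sInf_eq_iInf]
  refine ENNReal.le_iInf₂_add_iInf₂ ?_
  rintro _ ⟨m, l, hm, hl, hx, rfl⟩ _ ⟨m', l', hm', hl', hy, rfl⟩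
  have hfrac : ((l' * m + l * m' : ℕ) : ℝ≥0∞) / (l * l' : ℕ) = m / l + m' / l' := by
    have hl0 : (l : ℝ≥0∞) ≠ 0 := by exact_mod_cast hl.ne'
    have hl0' : (l' : ℝ≥0∞) ≠ 0 := by exact_mod_cast hl'.ne'
    push_cast
    rw [ENNReal.add_div, ENNReal.mul_div_mul_left _ _ hl0 (by simp), mul_comm (l : ℝ≥0∞),
      ENNReal.mul_div_mul_left _ _ hl0' (by simp)]
  rw [← hfrac]
  exact mink_le_of_mem_ratDil (by positivity) (by positivity) (add_mem_ratDil hl hl' hx hy)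

theorem tendsto_mink_nhds_zero [TopologicalSpace X] [ContinuousAdd X] (hC : C ∈ 𝓝 0) :
    Tendsto (mink C) (𝓝 0) (𝓝 0) := by
  refine ENNReal.tendsto_nhds_zero.2 fun ε hε => ?_
  obtain ⟨l, hl⟩ := ENNReal.exists_inv_nat_lt hε.ne'
  have hl0 : 0 < l := Nat.pos_of_ne_zero fun h => by simp [h] at hl
  have hsmul : ∀ᶠ x in 𝓝 (0 : X), l • x ∈ C :=
    (continuous_nsmul l).tendsto' 0 0 (nsmul_zero l) hC
  exact hsmul.mono fun x hx => (mink_le_inv_of_nsmul_mem hl0 hx).trans hl.le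

end AddCommMonoid

theorem mink_ne_top {X : Type*} [AddCommGroup X] [TopologicalSpace X]
    [IsTopologicalAddGroup X] [PreconnectedSpace X] {C : Set X} (hC : C ∈ 𝓝 0) (x : X) :
    mink C x ≠ ⊤ := by
  have hx : x ∈ AddSubmonoid.closure C := by
    simp [AddSubmonoid.closure_eq_top_of_mem_nhds_zero hC]
  have h_mem : ∀ y ∈ C, mink C y ≠ ⊤ := fun y hy =>
    ne_top_of_le_ne_top (by simp) (mink_le_inv_of_nsmul_mem one_pos (by simpa using hy))
  induction hx using AddSubmonoid.closure_induction with
  | mem y hy => exact h_mem y hy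
  | zero => exact h_mem 0 (mem_of_mem_nhds hC)
  | add y z _ _ hy hz =>
    exact ne_top_of_le_ne_top (ENNReal.add_ne_top.2 ⟨hy, hz⟩) (mink_add_le y z)

theorem mink_finite_continuous_general
    {X : Type*} [AddCommGroup X] [TopologicalSpace X] [IsTopologicalAddGroup X]
    [ConnectedSpace X] {C : Set X}
    (h0 : (0 : X) ∈ interior C) :
    (∀ x : X, mink C x ≠ ⊤) ∧ Continuous (fun x : X => (mink C x).toReal) := by
  have hC : C ∈ 𝓝 0 := mem_interior_iff_mem_nhds.1 h0
  have hfin : ∀ x, mink C x ≠ ⊤ := mink_ne_top hC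
  refine ⟨hfin, continuous_of_subadditive_of_tendsto_zero
    (fun x y => ENNReal.toReal_le_add (mink_add_le x y) (hfin x) (hfin y)) ?_⟩
  exact (ENNReal.tendsto_toReal ENNReal.zero_ne_top).comp (tendsto_mink_nhds_zero hC)

theorem mink_finite_continuous
    {X : Type*} [AddCommGroup X] [TopologicalSpace X] [IsTopologicalAddGroup X]
    [ConnectedSpace X] [T2Space X] {C : Set X} (hC : MConvex C)
    (h0 : (0 : X) ∈ interior C) :
    (∀ x : X, mink C x ≠ ⊤) ∧ Continuous (fun x : X => (mink C x).toReal) :=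
  mink_finite_continuous_general h0
end

section
/- Let X be an additive commutative monoid and let a : X → ℝ be an affine function (everywhere finite). Then the function φ(x) := a(x) − a(0) is additive, so that a(x) = a(0) + φ(x) for all x; moreover, if a(0) ≥ 0, then a is subadditive. -/
/-- A real-valued function on an additive commutative monoid is convex if whenever
`m • x = m₁ • x₁ + ⋯ + mₙ • xₙ` with positive integers `mᵢ` and `m = m₁ + ⋯ + mₙ`,
then `m * f x ≤ m₁ * f x₁ + ⋯ + mₙ * f xₙ`. -/
def MConvexR {X : Type*} [AddCommMonoid X] (f : X → ℝ) : Prop :=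
  ∀ (n : ℕ), 0 < n → ∀ (x : X) (xs : Fin n → X) (ms : Fin n → ℕ),
    (∀ i, 0 < ms i) → (∑ i, ms i) • x = ∑ i, ms i • xs i →
    ((∑ i, ms i : ℕ) : ℝ) * f x ≤ ∑ i, (ms i : ℝ) * f (xs i)

/-- A real-valued function is affine if it is both convex and concave. -/
def MAffineR {X : Type*} [AddCommMonoid X] (f : X → ℝ) : Prop :=
  MConvexR f ∧ MConvexR (fun x => -f x)

lemma affine_key {X : Type*} [AddCommMonoid X] (a : X → ℝ) (ha : MAffineR a)
    (z u v : X) (h : 2 • z = u + v) : 2 * a z = a u + a v := by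
  obtain ⟨h1, h2⟩ := ha
  have hsum : (∑ i : Fin 2, (![1,1] : Fin 2 → ℕ) i) = 2 := by decide
  have hc : (∑ i : Fin 2, (![1,1] : Fin 2 → ℕ) i) • z
      = ∑ i : Fin 2, (![1,1] : Fin 2 → ℕ) i • (![u,v] : Fin 2 → X) i := by
    simp [Fin.sum_univ_two, h, hsum]
  have e1 := h1 2 (by norm_num) z ![u,v] ![1,1] (by decide) hc
  have e2 := h2 2 (by norm_num) z ![u,v] ![1,1] (by decide) hc
  simp [Fin.sum_univ_two, hsum] at e1 e2
  linarith

theorem affine_eq_const_add_additive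
    {X : Type*} [AddCommMonoid X] (a : X → ℝ) (ha : MAffineR a) :
    (∀ x y : X, a (x + y) - a 0 = (a x - a 0) + (a y - a 0)) ∧
      (0 ≤ a 0 → ∀ x y : X, a (x + y) ≤ a x + a y) := by
  have key : ∀ x y : X, a (x + y) - a 0 = (a x - a 0) + (a y - a 0) := by
    intro x y
    have h1 : 2 * a (x + y) = a (2 • x) + a (2 • y) :=
      affine_key a ha (x + y) (2 • x) (2 • y) (smul_add 2 x y)
    have h2 : 2 * a x = a (2 • x) + a 0 :=
      affine_key a ha x (2 • x) 0 (by simp)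
    have h3 : 2 * a y = a (2 • y) + a 0 :=
      affine_key a ha y (2 • y) 0 (by simp)
    linarith
  refine ⟨key, fun h0 x y => ?_⟩
  have := key x y
  linarith
end

section
/- Let X be a semidivisible, connected, locally convex, Hausdorff topological additive commutative group, and let C ⊆ X be a nonempty convex compact set. Then C has at least one extreme point, i.e., E(C) ≠ ∅. -/
/-- `x` is an extreme point of `A` if `x ∈ A` and whenever
`m • x = m₁ • x₁ + ⋯ + mₙ • xₙ` with `xᵢ ∈ A`, positive integers `mᵢ`
and `m = m₁ + ⋯ + mₙ`, then `x₁ = ⋯ = xₙ = x`. -/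
def MExtreme {X : Type*} [AddCommMonoid X] (A : Set X) (x : X) : Prop :=
  x ∈ A ∧ ∀ (n : ℕ), 0 < n → ∀ (xs : Fin n → X) (ms : Fin n → ℕ),
    (∀ i, xs i ∈ A) → (∀ i, 0 < ms i) →
    (∑ i, ms i) • x = ∑ i, ms i • xs i → ∀ i, xs i = x

/-!
By Zorn's lemma and compactness, `C` has a minimal nonempty closed face `F`. If `F` contained
two points `a ≠ b`, a continuous additive `f : X →+ ℝ` with `f a ≠ f b` would attain its maximum
on `F` along a smaller nonempty closed face, so `F` is a single extreme point. Such an `f` comes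
from a Hahn–Banach argument over `ℤ`: a convex open neighbourhood `U` of `0` avoiding `a - b` has
a subadditive gauge (finite everywhere because `X` is connected, so `U` absorbs every point), and
an additive map dominated by this gauge is continuous.
-/

open Set Filter Topology Pointwise

section Gauge

variable {X : Type*} [AddCommGroup X]

lemma MConvex.mem_of_nsmul_mem_nsmul {U : Set X} (hU : MConvex U) {b : ℕ} (hb : 0 < b) {x : X}
    (hx : b • x ∈ b • U) : x ∈ U := by
  obtain ⟨us, hus, hsum⟩ := Set.mem_nsmul_iff_sum.mp hx
  exact hU b hb x us (fun _ => 1) hus (fun _ => one_pos) (by simpa using hsum.symm)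

lemma MConvex.mem_of_nsmul_mem_nsmul_of_le {U : Set X} (hU : MConvex U) (h0 : (0 : X) ∈ U)
    {a b : ℕ} (hb : 0 < b) (hab : a ≤ b) {x : X} (hx : b • x ∈ a • U) : x ∈ U :=
  hU.mem_of_nsmul_mem_nsmul hb (Set.nsmul_subset_nsmul_right h0 hab hx)

/-- Here `a • U` is the sumset `U + ⋯ + U` with `a` summands, not a dilate of `U`. -/
def nsmulRatios (U : Set X) (x : X) : Set ℝ :=
  {r | ∃ a b : ℕ, 0 < b ∧ b • x ∈ a • U ∧ r = a / b}

noncomputable def nsmulGauge (U : Set X) (x : X) : ℝ := sInf (nsmulRatios U x)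

lemma nsmulRatios_nonneg {U : Set X} {x : X} {r : ℝ} (hr : r ∈ nsmulRatios U x) : 0 ≤ r := by
  obtain ⟨a, b, -, -, rfl⟩ := hr
  positivity

lemma bddBelow_nsmulRatios (U : Set X) (x : X) : BddBelow (nsmulRatios U x) :=
  ⟨0, fun _ => nsmulRatios_nonneg⟩

lemma nsmulGauge_nonneg (U : Set X) (x : X) : 0 ≤ nsmulGauge U x :=
  Real.sInf_nonneg fun _ => nsmulRatios_nonneg

lemma nsmulGauge_le {U : Set X} {x : X} {r : ℝ} (hr : r ∈ nsmulRatios U x) : nsmulGauge U x ≤ r :=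
  csInf_le (bddBelow_nsmulRatios U x) hr

lemma nsmulGauge_le_inv {U : Set X} {x : X} {b : ℕ} (hb : 0 < b) (hx : b • x ∈ U) :
    nsmulGauge U x ≤ (b : ℝ)⁻¹ :=
  nsmulGauge_le ⟨1, b, hb, by rwa [one_nsmul], by simp⟩

lemma add_mem_nsmulRatios_add {U : Set X} {x y : X} {r s : ℝ} (hr : r ∈ nsmulRatios U x)
    (hs : s ∈ nsmulRatios U y) : r + s ∈ nsmulRatios U (x + y) := by
  obtain ⟨a, b, hb, hx, rfl⟩ := hr
  obtain ⟨a', b', hb', hy, rfl⟩ := hs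
  refine ⟨b' * a + b * a', b * b', Nat.mul_pos hb hb', ?_, ?_⟩
  · have hxy : (b * b') • (x + y) = b' • (b • x) + b • (b' • y) := by
      rw [smul_add, smul_smul, smul_smul, mul_comm b' b]
    rw [hxy, add_nsmul, mul_nsmul', mul_nsmul']
    exact Set.add_mem_add (Set.nsmul_mem_nsmul hx) (Set.nsmul_mem_nsmul hy)
  · push_cast
    field_simp

lemma nsmulGauge_add_le {U : Set X} (hU : ∀ x, (nsmulRatios U x).Nonempty) (x y : X) :
    nsmulGauge U (x + y) ≤ nsmulGauge U x + nsmulGauge U y := by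
  unfold nsmulGauge
  rw [← csInf_add (hU x) (bddBelow_nsmulRatios U x) (hU y) (bddBelow_nsmulRatios U y)]
  refine csInf_le_csInf (bddBelow_nsmulRatios U _) ((hU x).add (hU y)) ?_
  rintro _ ⟨r, hr, s, hs, rfl⟩
  exact add_mem_nsmulRatios_add hr hs

lemma natCast_le_nsmulGauge_nsmul {U : Set X} (hU : MConvex U) (h0 : (0 : X) ∈ U)
    (hne : ∀ x, (nsmulRatios U x).Nonempty) {d : X} (hd : d ∉ U) (n : ℕ) :
    (n : ℝ) ≤ nsmulGauge U (n • d) := by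
  rcases n.eq_zero_or_pos with rfl | hn
  · simpa using nsmulGauge_nonneg U 0
  refine le_csInf (hne _) ?_
  rintro _ ⟨a, b, hb, hmem, rfl⟩
  by_contra! hlt
  rw [div_lt_iff₀ (by positivity)] at hlt
  have hab : a ≤ b * n := by exact_mod_cast (mul_comm (b : ℝ) n ▸ hlt).le
  rw [smul_smul] at hmem
  exact hd (hU.mem_of_nsmul_mem_nsmul_of_le h0 (Nat.mul_pos hb hn) hab hmem)

end Gauge

section Absorbing

variable {X : Type*} [AddCommGroup X] [TopologicalSpace X] [IsTopologicalAddGroup X]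

lemma isClopen_of_forall_add_mem {S U : Set X} (hU : U ∈ 𝓝 0)
    (hSU : ∀ x ∈ S, ∀ u ∈ U, x + u ∈ S) : IsClopen S := by
  have hright (x : X) : {z | z - x ∈ U} ∈ 𝓝 x :=
    (continuous_sub_right x).continuousAt.preimage_mem_nhds (by rwa [sub_self])
  have hleft (y : X) : {z | y - z ∈ U} ∈ 𝓝 y :=
    (continuous_sub_left y).continuousAt.preimage_mem_nhds (by rwa [sub_self])
  refine ⟨isOpen_compl_iff.mp (isOpen_iff_mem_nhds.mpr fun y hy => ?_),
    isOpen_iff_mem_nhds.mpr fun x hx => ?_⟩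
  · filter_upwards [hleft y] with z hz hzS
    exact hy (by simpa using hSU z hzS _ hz)
  · filter_upwards [hright x] with z hz
    simpa using hSU x hx _ hz

variable [ConnectedSpace X]

lemma nsmulRatios_nonempty {U : Set X} (hU : U ∈ 𝓝 0) (x : X) : (nsmulRatios U x).Nonempty := by
  set S : Set X := {x | (nsmulRatios U x).Nonempty}
  have hS0 : (0 : X) ∈ S := ⟨_, 0, 1, one_pos, by simp, rfl⟩
  have hSU : ∀ x ∈ S, ∀ u ∈ U, x + u ∈ S := by
    rintro x ⟨_, a, b, hb, hx, rfl⟩ u hu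
    refine ⟨_, a + b, b, hb, ?_, rfl⟩
    rw [smul_add, add_nsmul]
    exact Set.add_mem_add hx (Set.nsmul_mem_nsmul hu)
  exact eq_univ_iff_forall.mp ((isClopen_of_forall_add_mem hU hSU).eq_univ ⟨0, hS0⟩) x

end Absorbing

section Extension

variable {X : Type*} [AddCommGroup X] {p : X → ℝ}

lemma apply_nsmul_le_of_subadditive (hp : ∀ x y, p (x + y) ≤ p x + p y) (x : X) {n : ℕ}
    (hn : 0 < n) : p (n • x) ≤ n * p x := by
  induction n, hn using Nat.le_induction with
  | base => simp
  | succ n _ ih =>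
    calc p ((n + 1) • x) ≤ p (n • x) + p x := by rw [succ_nsmul]; exact hp _ _
      _ ≤ (n + 1 : ℕ) * p x := by push_cast; linarith

lemma div_le_div_of_subadditive (hp : ∀ x y, p (x + y) ≤ p x + p y) {S : AddSubgroup (X × ℝ)}
    (hS : ∀ q ∈ S, q.2 ≤ p q.1) (x : X) {q q' : X × ℝ} (hq : q ∈ S) (hq' : q' ∈ S) {m n : ℕ}
    (hm : 0 < m) (hn : 0 < n) :
    (q.2 - p (q.1 - m • x)) / m ≤ (p (q'.1 + n • x) - q'.2) / n := by
  have hcomb : n • q.1 + m • q'.1 = n • (q.1 - m • x) + m • (q'.1 + n • x) := by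
    rw [smul_sub, smul_add, smul_smul, smul_smul, mul_comm n m]
    abel
  have key : n * q.2 + m * q'.2 ≤ n * p (q.1 - m • x) + m * p (q'.1 + n • x) :=
    calc n * q.2 + m * q'.2 ≤ p (n • q.1 + m • q'.1) := by
          simpa using hS _ (S.add_mem (S.nsmul_mem hq n) (S.nsmul_mem hq' m))
      _ ≤ p (n • (q.1 - m • x)) + p (m • (q'.1 + n • x)) := hcomb ▸ hp _ _
      _ ≤ _ := add_le_add (apply_nsmul_le_of_subadditive hp _ hn)
          (apply_nsmul_le_of_subadditive hp _ hm)
  rw [div_le_div_iff₀ (by positivity) (by positivity)]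
  linarith

lemma exists_sup_zmultiples_le (hp : ∀ x y, p (x + y) ≤ p x + p y) {S : AddSubgroup (X × ℝ)}
    (hS : ∀ q ∈ S, q.2 ≤ p q.1) (x : X) :
    ∃ c : ℝ, ∀ q ∈ S ⊔ AddSubgroup.zmultiples (x, c), q.2 ≤ p q.1 := by
  obtain ⟨c, hlow, hup⟩ := exists_between_of_forall_le
    (s := {t | ∃ q ∈ S, ∃ m : ℕ, 0 < m ∧ t = (q.2 - p (q.1 - m • x)) / m})
    (t := {t | ∃ q ∈ S, ∃ n : ℕ, 0 < n ∧ t = (p (q.1 + n • x) - q.2) / n})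
    ⟨_, 0, S.zero_mem, 1, one_pos, rfl⟩ ⟨_, 0, S.zero_mem, 1, one_pos, rfl⟩
    (by rintro _ ⟨q, hq, m, hm, rfl⟩ _ ⟨q', hq', n, hn, rfl⟩
        exact div_le_div_of_subadditive hp hS x hq hq' hm hn)
  refine ⟨c, fun _ h => ?_⟩
  obtain ⟨q, hq, _, ⟨k, rfl⟩, rfl⟩ := AddSubgroup.mem_sup.mp h
  simp only [Prod.smul_mk, Prod.fst_add, Prod.snd_add, zsmul_eq_mul]
  obtain ⟨n, rfl | rfl⟩ := k.eq_nat_or_neg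
  · rcases n.eq_zero_or_pos with rfl | hn
    · simpa using hS q hq
    have h := hup ⟨q, hq, n, hn, rfl⟩
    rw [le_div_iff₀ (by positivity)] at h
    simp only [Int.cast_natCast, natCast_zsmul]
    linarith
  · rcases n.eq_zero_or_pos with rfl | hn
    · simpa using hS q hq
    have h := hlow ⟨q, hq, n, hn, rfl⟩
    rw [div_le_iff₀ (by positivity)] at h
    simp only [Int.cast_neg, Int.cast_natCast, neg_zsmul, natCast_zsmul, ← sub_eq_add_neg]
    linarith

lemma snd_eq_zero_of_mk_zero_mem {S : AddSubgroup (X × ℝ)} (hS : ∀ q ∈ S, q.2 ≤ p q.1) {t : ℝ}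
    (ht : ((0 : X), t) ∈ S) : t = 0 := by
  have hmul (n : ℕ) : n * |t| ≤ p 0 := by
    rcases abs_choice t with h | h
    · simpa [h] using hS _ (S.nsmul_mem ht n)
    · simpa [h] using hS _ (S.nsmul_mem (S.neg_mem ht) n)
  by_contra hne
  obtain ⟨n, hn⟩ := exists_nat_gt (p 0 / |t|)
  rw [div_lt_iff₀ (abs_pos.mpr hne)] at hn
  linarith [hmul n]

lemma AddSubgroup.exists_addMonoidHom_of_graph (M : AddSubgroup (X × ℝ))
    (htot : ∀ x, ∃ r, (x, r) ∈ M) (hfun : ∀ t, ((0 : X), t) ∈ M → t = 0) :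
    ∃ f : X →+ ℝ, ∀ q ∈ M, f q.1 = q.2 := by
  choose F hF using htot
  have hgraph (x : X) (r : ℝ) (hr : (x, r) ∈ M) : F x = r :=
    sub_eq_zero.mp (hfun _ (by simpa using M.sub_mem (hF x) hr))
  refine ⟨AddMonoidHom.mk' F fun x y => ?_, fun q hq => hgraph q.1 q.2 hq⟩
  exact hgraph _ _ (M.add_mem (hF x) (hF y))

/-- Hahn–Banach over `ℤ`; partial additive maps are encoded by their graphs, subgroups of
`X × ℝ`. -/
theorem exists_addMonoidHom_le_of_subadditive (hp : ∀ x y, p (x + y) ≤ p x + p y)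
    (S : AddSubgroup (X × ℝ)) (hS : ∀ q ∈ S, q.2 ≤ p q.1) :
    ∃ f : X →+ ℝ, (∀ x, f x ≤ p x) ∧ ∀ q ∈ S, f q.1 = q.2 := by
  have hchain : ∀ c ⊆ {M : AddSubgroup (X × ℝ) | ∀ q ∈ M, q.2 ≤ p q.1}, IsChain (· ≤ ·) c →
      ∀ N ∈ c, ∃ M ∈ {M : AddSubgroup (X × ℝ) | ∀ q ∈ M, q.2 ≤ p q.1}, ∀ N ∈ c, N ≤ M := by
    refine fun c hc hchain N hN => ⟨sSup c, fun q hq => ?_, fun _ => le_sSup⟩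
    obtain ⟨N', hN', hq⟩ := (AddSubgroup.mem_sSup_of_directedOn ⟨N, hN⟩ hchain.directedOn).mp hq
    exact hc hN' q hq
  obtain ⟨M, hSM, hM⟩ := zorn_le_nonempty₀ _ hchain S hS
  have htot (x : X) : ∃ r, (x, r) ∈ M := by
    obtain ⟨c, hc⟩ := exists_sup_zmultiples_le hp hM.prop x
    have hMc : M ⊔ AddSubgroup.zmultiples (x, c) = M := hM.eq_of_ge hc le_sup_left
    exact ⟨c, hMc ▸ AddSubgroup.mem_sup_right (AddSubgroup.mem_zmultiples _)⟩
  obtain ⟨f, hf⟩ :=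
    M.exists_addMonoidHom_of_graph htot fun _ => snd_eq_zero_of_mk_zero_mem hM.prop
  refine ⟨f, fun x => ?_, fun q hq => hf q (hSM hq)⟩
  obtain ⟨r, hr⟩ := htot x
  exact (hf _ hr).trans_le (hM.prop _ hr)

end Extension

section Separation

variable {X : Type*} [AddCommGroup X] [TopologicalSpace X] [IsTopologicalAddGroup X]

lemma AddMonoidHom.continuous_of_le_nsmulGauge {U : Set X} (hU : U ∈ 𝓝 0) (f : X →+ ℝ)
    (hf : ∀ x, f x ≤ nsmulGauge U x) : Continuous f := by
  refine continuous_of_continuousAt_zero f (Metric.tendsto_nhds.mpr fun ε hε => ?_)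
  obtain ⟨b, hb⟩ := exists_nat_gt ε⁻¹
  have hbpos : 0 < b := by exact_mod_cast (inv_pos.mpr hε).trans hb
  have hsmall (z : X) (hz : b • z ∈ U) : f z < ε :=
    (hf z).trans_lt ((nsmulGauge_le_inv hbpos hz).trans_lt (inv_lt_of_inv_lt₀ hε hb))
  have hnhds : ∀ᶠ z in 𝓝 (0 : X), b • z ∈ U :=
    (continuous_nsmul b).tendsto' 0 0 (nsmul_zero b) hU
  filter_upwards [hnhds, (continuous_neg.tendsto' 0 0 neg_zero).eventually hnhds] with z hz hz'
  rw [map_zero, Real.dist_eq, sub_zero, abs_lt]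
  exact ⟨by linarith [hsmall _ hz', map_neg f z], hsmall z hz⟩

variable [ConnectedSpace X]

lemma exists_addMonoidHom_le_nsmulGauge_apply_eq_one {U : Set X} (hUc : MConvex U)
    (hU : U ∈ 𝓝 0) {d : X} (hd : d ∉ U) :
    ∃ f : X →+ ℝ, (∀ x, f x ≤ nsmulGauge U x) ∧ f d = 1 := by
  have hne := nsmulRatios_nonempty hU
  have hseed : ∀ q ∈ AddSubgroup.zmultiples (d, (1 : ℝ)), q.2 ≤ nsmulGauge U q.1 := by
    rintro _ ⟨k, rfl⟩
    obtain ⟨n, rfl | rfl⟩ := k.eq_nat_or_neg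
    · simpa using natCast_le_nsmulGauge_nsmul hUc (mem_of_mem_nhds hU) hne hd n
    · simpa using (neg_nonpos.mpr n.cast_nonneg).trans (nsmulGauge_nonneg U _)
  obtain ⟨f, hf, hfd⟩ := exists_addMonoidHom_le_of_subadditive (nsmulGauge_add_le hne) _ hseed
  exact ⟨f, hf, by simpa using hfd (d, 1) (AddSubgroup.mem_zmultiples _)⟩

theorem exists_continuous_addMonoidHom_apply_ne [T1Space X] (hlc : LocallyMConvex X) {a b : X}
    (hab : a ≠ b) : ∃ f : X →+ ℝ, Continuous f ∧ f a ≠ f b := by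
  obtain ⟨B, hB, hBc⟩ := hlc
  obtain ⟨U, hUB, h0U, hUsub⟩ := hB.exists_subset_of_mem_open
    (Set.mem_compl_singleton_iff.mpr (sub_ne_zero.mpr hab).symm) isOpen_compl_singleton
  have hU : U ∈ 𝓝 0 := (hB.isOpen hUB).mem_nhds h0U
  obtain ⟨f, hf, hfd⟩ :=
    exists_addMonoidHom_le_nsmulGauge_apply_eq_one (hBc U hUB) hU fun h => hUsub h rfl
  refine ⟨f, f.continuous_of_le_nsmulGauge hU hf, fun h => ?_⟩
  rw [map_sub, h, sub_self] at hfd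
  exact zero_ne_one hfd

end Separation

section Faces

variable {X : Type*} [AddCommGroup X]

def IsMFace (C F : Set X) : Prop :=
  F ⊆ C ∧ ∀ (n : ℕ), 0 < n → ∀ (x : X) (xs : Fin n → X) (ms : Fin n → ℕ),
    x ∈ F → (∀ i, xs i ∈ C) → (∀ i, 0 < ms i) →
    (∑ i, ms i) • x = ∑ i, ms i • xs i → ∀ i, xs i ∈ F

lemma IsMFace.refl (C : Set X) : IsMFace C C :=
  ⟨subset_rfl, fun _ _ _ _ _ _ hxs _ _ => hxs⟩

lemma IsMFace.trans {C F G : Set X} (hF : IsMFace C F) (hG : IsMFace F G) : IsMFace C G :=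
  ⟨hG.1.trans hF.1, fun n hn x xs ms hx hxs hms hsum =>
    hG.2 n hn x xs ms hx (hF.2 n hn x xs ms (hG.1 hx) hxs hms hsum) hms hsum⟩

lemma isMFace_sInter {C : Set X} {𝓕 : Set (Set X)} (hne : 𝓕.Nonempty)
    (h𝓕 : ∀ F ∈ 𝓕, IsMFace C F) : IsMFace C (⋂₀ 𝓕) := by
  obtain ⟨F, hF⟩ := hne
  exact ⟨(sInter_subset_of_mem hF).trans (h𝓕 F hF).1, fun n hn x xs ms hx hxs hms hsum i =>
    mem_sInter.mpr fun G hG => (h𝓕 G hG).2 n hn x xs ms (hx G hG) hxs hms hsum i⟩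

lemma IsMFace.mExtreme {C : Set X} {x : X} (h : IsMFace C {x}) : MExtreme C x :=
  ⟨h.1 rfl, fun n hn xs ms hxs hms hsum => h.2 n hn x xs ms rfl hxs hms hsum⟩

lemma isMFace_setOf_apply_eq_of_isMaxOn (F : Set X) (f : X →+ ℝ) {z : X} (hz : IsMaxOn f F z) :
    IsMFace F {x ∈ F | f x = f z} := by
  refine ⟨fun x hx => hx.1, fun n hn x xs ms hx hxs hms hsum i => ⟨hxs i, ?_⟩⟩
  have hle (j : Fin n) : (ms j : ℝ) * f (xs j) ≤ ms j * f z :=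
    mul_le_mul_of_nonneg_left (hz (hxs j)) (by positivity)
  have heq : ∑ j, (ms j : ℝ) * f (xs j) = ∑ j, (ms j : ℝ) * f z := by
    simpa [map_sum, hx.2, Finset.sum_mul] using (congrArg f hsum).symm
  have hi := (Finset.sum_eq_sum_iff_of_le fun j _ => hle j).mp heq i (Finset.mem_univ i)
  exact mul_left_cancel₀ (Nat.cast_ne_zero.mpr (hms i).ne') hi

variable [TopologicalSpace X]

lemma exists_minimal_isClosed_isMFace [T2Space X] {C : Set X} (hne : C.Nonempty)
    (hC : IsCompact C) : ∃ F, Minimal (fun F => F.Nonempty ∧ IsClosed F ∧ IsMFace C F) F := by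
  have hchain : ∀ c ⊆ {F | F.Nonempty ∧ IsClosed F ∧ IsMFace C F}, IsChain (· ⊆ ·) c →
      c.Nonempty → ∃ G ∈ {F | F.Nonempty ∧ IsClosed F ∧ IsMFace C F}, ∀ F ∈ c, G ⊆ F := by
    intro c hc hchain hcne
    have : Nonempty c := hcne.to_subtype
    refine ⟨⋂₀ c, ⟨?_, isClosed_sInter fun F hF => (hc hF).2.1, isMFace_sInter hcne
      fun F hF => (hc hF).2.2⟩, fun F hF => sInter_subset_of_mem hF⟩
    exact IsCompact.nonempty_sInter_of_directed_nonempty_isCompact_isClosed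
      (IsChain.directedOn (r := fun F G : Set X => F ⊇ G) hchain.symm) (fun F hF => (hc hF).1)
      (fun F hF => hC.of_isClosed_subset (hc hF).2.1 (hc hF).2.2.1) (fun F hF => (hc hF).2.1)
  obtain ⟨F, -, hF⟩ := zorn_superset_nonempty _ hchain C ⟨hne, hC.isClosed, .refl C⟩
  exact ⟨F, hF⟩

lemma Minimal.subsingleton_of_separating {C : Set X} (hC : IsCompact C)
    (hsep : ∀ a b : X, a ≠ b → ∃ f : X →+ ℝ, Continuous f ∧ f a ≠ f b) {F : Set X}
    (hF : Minimal (fun F => F.Nonempty ∧ IsClosed F ∧ IsMFace C F) F) : F.Subsingleton := by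
  obtain ⟨hFne, hFcl, hFC⟩ : F.Nonempty ∧ IsClosed F ∧ IsMFace C F := hF.prop
  intro a ha b hb
  by_contra hab
  obtain ⟨f, hfc, hfab⟩ := hsep a b hab
  obtain ⟨z, hzF, hz⟩ := (hC.of_isClosed_subset hFcl hFC.1).exists_isMaxOn hFne hfc.continuousOn
  have hFG := hF.eq_of_superset (t := {x ∈ F | f x = f z})
    ⟨⟨z, hzF, rfl⟩, hFcl.inter (isClosed_eq hfc continuous_const),
      hFC.trans (isMFace_setOf_apply_eq_of_isMaxOn F f hz)⟩
    fun x hx => hx.1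
  rw [hFG] at ha hb
  exact hfab (ha.2.trans hb.2.symm)

end Faces

theorem exists_extreme_point_general
    {X : Type*} [AddCommGroup X] [TopologicalSpace X] [IsTopologicalAddGroup X]
    [ConnectedSpace X] [T2Space X]
    (hlc : LocallyMConvex X)
    {C : Set X} (hne : C.Nonempty) (hcomp : IsCompact C) :
    ∃ x : X, MExtreme C x := by
  obtain ⟨F, hF⟩ := exists_minimal_isClosed_isMFace hne hcomp
  obtain ⟨e, he⟩ := hF.prop.1
  have hFe : F = {e} := (hF.subsingleton_of_separating hcomp
    fun _ _ => exists_continuous_addMonoidHom_apply_ne hlc).eq_singleton_of_mem he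
  exact ⟨e, (hFe ▸ hF.prop.2.2).mExtreme⟩

theorem exists_extreme_point
    {X : Type*} [AddCommGroup X] [TopologicalSpace X] [IsTopologicalAddGroup X]
    [ConnectedSpace X] [T2Space X]
    (hsd : ∃ p : ℕ, p.Prime ∧ ∀ x : X, ∃ y : X, x = p • y)
    (hlc : LocallyMConvex X)
    {C : Set X} (hne : C.Nonempty) (hconv : MConvex C) (hcomp : IsCompact C) :
    ∃ x : X, MExtreme C x :=
  exists_extreme_point_general hlc hne hcomp
end

section
/- Let X be a uniquely divisible, connected, locally convex, Hausdorff topological additive commutative group and let a, b ∈ X. There is a unique function F : ℚ → X such that for every rational q = m/l with m ∈ ℤ and l a positive integer, l•F(q) = m•a + (l−m)•b (integer multiples taken in the group X), and this function F is continuous on ℚ (with the topology induced from ℝ). -/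
/-!
Unique divisibility makes `F q` the unique solution `x` of
`q.den • x = q.num • a + (q.den - q.num) • b`. For continuity at `q₀`, write `q - q₀ = m / l`, so
that `l • (F q - F q₀) = m • (a - b)`. If `V ∋ F q₀` is a convex basic open set, then
`W = (V - F q₀) ∩ (F q₀ - V)` is a convex symmetric neighbourhood of `0`; as `X` is connected, `W`
generates `X`, so `a - b = w₁ + ⋯ + w_k` with `wᵢ ∈ W`. When `|m| k < l`, the identity
`l • x = m • (w₁ + ⋯ + w_k) + (l - |m| k) • 0` (after replacing `wᵢ` by `-wᵢ` if `m < 0`) puts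
`x = F q - F q₀` in `W` by convexity, i.e. `F q ∈ V` as soon as `|q - q₀| < 1 / k`.
-/

open Filter Topology

section MConvex

variable {X : Type*}

theorem MConvex.inter [AddCommMonoid X] {V W : Set X} (hV : MConvex V) (hW : MConvex W) :
    MConvex (V ∩ W) := fun n hn x xs ms hxs hms h =>
  ⟨hV n hn x xs ms (fun i => (hxs i).1) hms h, hW n hn x xs ms (fun i => (hxs i).2) hms h⟩

theorem MConvex.preimage_add_left [AddCommMonoid X] {W : Set X} (hW : MConvex W) (p : X) :
    MConvex ((p + ·) ⁻¹' W) := by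
  intro n hn x xs ms hxs hms h
  refine hW n hn (p + x) (p + xs ·) ms hxs hms ?_
  simp only [smul_add, h, Finset.sum_add_distrib, Finset.sum_smul]

theorem MConvex.neg [AddCommGroup X] {W : Set X} (hW : MConvex W) : MConvex (-W) := by
  intro n hn x xs ms hxs hms h
  refine hW n hn (-x) (-xs ·) ms hxs hms ?_
  simp only [smul_neg, h, Finset.sum_neg_distrib]

theorem MConvex.mem_of_nsmul_eq_nsmul_sum [AddCommMonoid X] {W : Set X} (hW : MConvex W)
    (h0 : 0 ∈ W) {k : ℕ} {w : Fin k → X} (hw : ∀ i, w i ∈ W) {x : X} {m l : ℕ} (hm : 0 < m)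
    (hlt : m * k < l) (hx : l • x = m • ∑ i, w i) : x ∈ W := by
  refine hW (k + 1) k.succ_pos x (Fin.cons 0 w) (Fin.cons (l - m * k) fun _ => m)
    (Fin.cases h0 hw) (Fin.cases (Nat.sub_pos_of_lt hlt) fun _ => hm) ?_
  have hweights : l - m * k + ∑ _i : Fin k, m = l := by
    simp only [Finset.sum_const, Finset.card_univ, Fintype.card_fin, smul_eq_mul]
    rw [mul_comm k m]
    omega
  simp only [Fin.sum_univ_succ, Fin.cons_zero, Fin.cons_succ, smul_zero, zero_add,
    hweights, hx, Finset.smul_sum]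

theorem MConvex.mem_of_zsmul_eq_zsmul_sum [AddCommGroup X] {W : Set X} (hW : MConvex W)
    (h0 : 0 ∈ W) (hneg : ∀ x ∈ W, -x ∈ W) {k : ℕ} {w : Fin k → X} (hw : ∀ i, w i ∈ W) {x : X}
    {m : ℤ} {l : ℕ} (hlt : |m| * k < l) (hx : (l : ℤ) • x = m • ∑ i, w i) : x ∈ W := by
  obtain ⟨n, rfl | rfl⟩ := Int.eq_nat_or_neg m
  all_goals
    simp only [abs_neg, Nat.abs_cast] at hlt
    replace hlt : n * k < l := by exact_mod_cast hlt
    rcases n.eq_zero_or_pos with rfl | hn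
    · refine hW.mem_of_nsmul_eq_nsmul_sum h0 (k := 0) (w := Fin.elim0) finZeroElim one_pos
        (by simpa using hlt) ?_
      simpa [natCast_zsmul] using hx
  · refine hW.mem_of_nsmul_eq_nsmul_sum h0 hw hn hlt ?_
    simpa only [natCast_zsmul] using hx
  · refine hW.mem_of_nsmul_eq_nsmul_sum h0 (fun i => hneg _ (hw i)) hn hlt ?_
    simpa only [natCast_zsmul, neg_smul, ← smul_neg, Finset.sum_neg_distrib] using hx

end MConvex

theorem AddSubgroup.closure_eq_top_of_mem_nhds_zero {X : Type*} [AddGroup X]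
    [TopologicalSpace X] [SeparatelyContinuousAdd X] [PreconnectedSpace X] {W : Set X}
    (hW : W ∈ 𝓝 0) : closure W = ⊤ := by
  have hopen : IsOpen (closure W : Set X) :=
    isOpen_of_mem_nhds _ (mem_of_superset hW subset_closure)
  exact coe_eq_univ.1 <| IsClopen.eq_univ ⟨isClosed_of_isOpen _ hopen, hopen⟩ ⟨0, zero_mem _⟩

theorem exists_fin_sum_eq_of_mem_nhds_zero {X : Type*} [AddCommGroup X] [TopologicalSpace X]
    [SeparatelyContinuousAdd X] [PreconnectedSpace X] {W : Set X} (hW : W ∈ 𝓝 0)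
    (hneg : ∀ x ∈ W, -x ∈ W) (v : X) :
    ∃ (k : ℕ) (w : Fin k → X), (∀ i, w i ∈ W) ∧ ∑ i, w i = v := by
  have hsymm : W ∪ -W = W := Set.union_eq_left.2 fun x hx => by simpa using hneg _ hx
  have hv : v ∈ AddSubmonoid.closure W := by
    rw [← hsymm, ← AddSubgroup.closure_toAddSubmonoid,
      AddSubgroup.closure_eq_top_of_mem_nhds_zero hW]
    trivial
  obtain ⟨L, hLW, rfl⟩ := AddSubmonoid.exists_list_of_mem_closure hv
  exact ⟨L.length, L.get, fun i => hLW _ (L.get_mem i), by rw [← List.sum_ofFn, List.ofFn_get]⟩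

theorem MConvex.exists_forall_zsmul_eq_zsmul_mem {X : Type*} [AddCommGroup X]
    [TopologicalSpace X] [SeparatelyContinuousAdd X] [PreconnectedSpace X] {W : Set X}
    (hW : MConvex W) (hW0 : W ∈ 𝓝 0) (hneg : ∀ x ∈ W, -x ∈ W) (v : X) :
    ∃ N : ℕ, ∀ (x : X) (m : ℤ) (l : ℕ), |m| * N < l → (l : ℤ) • x = m • v → x ∈ W := by
  obtain ⟨k, w, hw, rfl⟩ := exists_fin_sum_eq_of_mem_nhds_zero hW0 hneg v
  exact ⟨k, fun x m l hlt hx =>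
    hW.mem_of_zsmul_eq_zsmul_sum (mem_of_mem_nhds hW0) hneg hw hlt hx⟩

theorem Rat.num_mul_eq_mul_den_of_eq_div {q : ℚ} {m : ℤ} {l : ℕ} (hl : 0 < l)
    (hq : q = (m : ℚ) / (l : ℚ)) : q.num * l = m * q.den := by
  have : (q.num : ℚ) * l = m * q.den := by
    rw [← Rat.mul_den_eq_num, hq]
    field_simp
  exact_mod_cast this

section SegmentMap

variable {X : Type*} [AddCommGroup X] {a b : X} {F : ℚ → X}

def IsSegmentMap (a b : X) (F : ℚ → X) : Prop :=
  ∀ (q : ℚ) (m : ℤ) (l : ℕ), 0 < l → q = (m : ℚ) / (l : ℚ) →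
    (l : ℤ) • F q = m • a + ((l : ℤ) - m) • b

theorem isSegmentMap_iff (hinj : ∀ n : ℕ, 0 < n → Function.Injective fun x : X => n • x) :
    IsSegmentMap a b F ↔ ∀ q : ℚ, (q.den : ℤ) • F q = q.num • a + ((q.den : ℤ) - q.num) • b := by
  refine ⟨fun hF q => hF q q.num q.den q.pos (Rat.num_div_den q).symm, fun hden q m l hl hq => ?_⟩
  apply hinj q.den q.pos
  simp only [← natCast_zsmul]
  rw [smul_comm, hden q]
  linear_combination (norm := module) Rat.num_mul_eq_mul_den_of_eq_div hl hq • (a - b)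

theorem existsUnique_isSegmentMap
    (hud : ∀ n : ℕ, 0 < n → Function.Bijective fun x : X => n • x) (a b : X) :
    ∃! F, IsSegmentMap a b F := by
  have hinj n hn := (hud n hn).1
  choose F hF using fun q : ℚ => (hud q.den q.pos).2 (q.num • a + ((q.den : ℤ) - q.num) • b)
  refine ⟨F, (isSegmentMap_iff hinj).2 fun q => by simpa only [natCast_zsmul] using hF q,
    fun G hG => funext fun q => hinj q.den q.pos ?_⟩
  simp only [← natCast_zsmul, (isSegmentMap_iff hinj).1 hG q]
  simpa only [natCast_zsmul] using (hF q).symm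

theorem IsSegmentMap.zsmul_sub (hF : IsSegmentMap a b F) {q q' : ℚ} {m m' : ℤ} {l : ℕ}
    (hl : 0 < l) (hq : q = (m : ℚ) / (l : ℚ)) (hq' : q' = (m' : ℚ) / (l : ℚ)) :
    (l : ℤ) • (F q - F q') = (m - m') • (a - b) := by
  rw [smul_sub, hF q m l hl hq, hF q' m' l hl hq']
  module

theorem IsSegmentMap.exists_zsmul_sub_eq_zsmul_of_abs_sub_mul_lt (hF : IsSegmentMap a b F)
    {q q₀ : ℚ} {N : ℕ} (hq : |q - q₀| * N < 1) :
    ∃ (m : ℤ) (l : ℕ), |m| * N < l ∧ (l : ℤ) • (F q - F q₀) = m • (a - b) := by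
  have hl : 0 < q.den * q₀.den := Nat.mul_pos q.pos q₀.pos
  have hqeq : q = ((q.num * q₀.den : ℤ) : ℚ) / ((q.den * q₀.den : ℕ) : ℚ) := by
    push_cast
    rw [mul_div_mul_right _ _ (by positivity), Rat.num_div_den]
  have hq₀eq : q₀ = ((q₀.num * q.den : ℤ) : ℚ) / ((q.den * q₀.den : ℕ) : ℚ) := by
    push_cast
    rw [mul_comm (q.den : ℚ), mul_div_mul_right _ _ (by positivity), Rat.num_div_den]
  refine ⟨_, _, ?_, hF.zsmul_sub hl hqeq hq₀eq⟩
  have hdiff : ((q.num * q₀.den - q₀.num * q.den : ℤ) : ℚ) = (q - q₀) * (q.den * q₀.den : ℕ) := by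
    push_cast
    rw [← Rat.mul_den_eq_num q, ← Rat.mul_den_eq_num q₀]
    ring
  have : |((q.num * q₀.den - q₀.num * q.den : ℤ) : ℚ)| * N < ((q.den * q₀.den : ℕ) : ℚ) := by
    rw [hdiff, abs_mul, Nat.abs_cast]
    nlinarith [show (0 : ℚ) < (q.den * q₀.den : ℕ) by exact_mod_cast hl]
  exact_mod_cast this

theorem IsSegmentMap.continuous [TopologicalSpace X] [IsTopologicalAddGroup X]
    [PreconnectedSpace X] (hlc : LocallyMConvex X) (hF : IsSegmentMap a b F) :
    Continuous F := by
  obtain ⟨B, hB, hBconv⟩ := hlc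
  refine continuous_iff_continuousAt.2 fun q₀ => hB.nhds_hasBasis.tendsto_right_iff.2 ?_
  rintro V ⟨hVB, hq₀V⟩
  set T := (F q₀ + ·) ⁻¹' V
  have hTconv : MConvex T := (hBconv V hVB).preimage_add_left _
  have hTopen : IsOpen T := (hB.isOpen hVB).preimage (continuous_const_add _)
  set W := T ∩ -T
  have hW0 : W ∈ 𝓝 0 :=
    (hTopen.inter hTopen.neg).mem_nhds ⟨by simpa [T] using hq₀V, by simpa [T] using hq₀V⟩
  have hWneg : ∀ x ∈ W, -x ∈ W := fun x hx => ⟨hx.2, by simpa using hx.1⟩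
  obtain ⟨N, hN⟩ := (hTconv.inter hTconv.neg).exists_forall_zsmul_eq_zsmul_mem hW0 hWneg (a - b)
  have hnear : ∀ᶠ q in 𝓝 q₀, |q - q₀| * N < 1 :=
    (by fun_prop : Continuous fun q : ℚ => |q - q₀| * N).continuousAt.eventually_lt
      continuousAt_const (by simp)
  filter_upwards [hnear] with q hq
  obtain ⟨m, l, hlt, hml⟩ := hF.exists_zsmul_sub_eq_zsmul_of_abs_sub_mul_lt hq
  simpa [T] using (hN _ _ _ hlt hml).1

end SegmentMap

theorem segment_map_exists_unique_and_continuous_general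
    {X : Type*} [AddCommGroup X] [TopologicalSpace X] [IsTopologicalAddGroup X]
    [ConnectedSpace X]
    (hud : ∀ n : ℕ, 0 < n → Function.Bijective (fun x : X => n • x))
    (hlc : LocallyMConvex X) (a b : X) :
    (∃! F : ℚ → X, ∀ (q : ℚ) (m : ℤ) (l : ℕ), 0 < l → q = (m : ℚ) / (l : ℚ) →
        (l : ℤ) • F q = m • a + ((l : ℤ) - m) • b) ∧
      ∀ F : ℚ → X, (∀ (q : ℚ) (m : ℤ) (l : ℕ), 0 < l → q = (m : ℚ) / (l : ℚ) →
        (l : ℤ) • F q = m • a + ((l : ℤ) - m) • b) → Continuous F :=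
  ⟨existsUnique_isSegmentMap hud a b, fun _ hF => IsSegmentMap.continuous hlc hF⟩

theorem segment_map_exists_unique_and_continuous
    {X : Type*} [AddCommGroup X] [TopologicalSpace X] [IsTopologicalAddGroup X]
    [ConnectedSpace X] [T2Space X]
    (hud : ∀ n : ℕ, 0 < n → Function.Bijective (fun x : X => n • x))
    (hlc : LocallyMConvex X) (a b : X) :
    (∃! F : ℚ → X, ∀ (q : ℚ) (m : ℤ) (l : ℕ), 0 < l → q = (m : ℚ) / (l : ℚ) →
        (l : ℤ) • F q = m • a + ((l : ℤ) - m) • b) ∧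
      ∀ F : ℚ → X, (∀ (q : ℚ) (m : ℤ) (l : ℕ), 0 < l → q = (m : ℚ) / (l : ℚ) →
        (l : ℤ) • F q = m • a + ((l : ℤ) - m) • b) → Continuous F :=
  segment_map_exists_unique_and_continuous_general hud hlc a b
end

section
/- Milman converse theorem for groups: Let X be a uniquely divisible, connected, locally convex, Hausdorff topological additive commutative group, and let C ⊆ X be a compact set such that the closed convex hull closure(conv(C)) is compact. Then every extreme point of closure(conv(C)) belongs to C, i.e., E(closure(conv(C))) ⊆ C. -/
/-- The convex hull of `A`: the smallest convex set containing `A`. -/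
def mconvHull {X : Type*} [AddCommMonoid X] (A : Set X) : Set X :=
  ⋂₀ {C : Set X | A ⊆ C ∧ MConvex C}

/-!
Unique divisibility makes `X` a `ℚ`-vector space in which the convexity notions of the statement
are the usual ones over `ℚ`, and local convexity makes every map `x ↦ q • x` continuous.

If `K = closure (conv (A ∪ B))` is compact, every point of `conv (A ∪ B)` is the midpoint of a
point of `conv A` or of `conv B` and a point of `K`. The sets `½ • closure (conv A) + ½ • K` are
compact, so the same holds on all of `K`, and an extreme point of `K` lies in `closure (conv A)` or
in `closure (conv B)`. If an extreme point `x` of `closure (conv C)` were outside `C`, cover `C` by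
finitely many convex neighbourhoods `U` whose closures miss `x`: then `x` lies in the closed convex
hull of some `C ∩ U`, hence in `closure U`, a contradiction.
-/

open Set Pointwise Topology

section HalfSplit

variable {𝕜 E : Type*} [Field 𝕜] [LinearOrder 𝕜] [IsStrictOrderedRing 𝕜]
  [AddCommGroup E] [Module 𝕜 E]

theorem smul_add_smul_mem_half_smul_add {S T : Set E} {y z : E} {a b : 𝕜}
    (ha : 2⁻¹ ≤ a) (hb : 0 ≤ b) (hab : a + b = 1) (hy : y ∈ S) (hT : segment 𝕜 y z ⊆ T) :
    a • y + b • z ∈ (2⁻¹ : 𝕜) • S + (2⁻¹ : 𝕜) • T := by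
  -- `a • y + b • z` is the midpoint of `y` and `(2a - 1) • y + 2b • z`
  have hu : (2 * a - 1) • y + (2 * b) • z ∈ T :=
    hT ⟨2 * a - 1, 2 * b, by linarith, by linarith, by linear_combination 2 * hab, rfl⟩
  refine ⟨_, smul_mem_smul_set hy, _, smul_mem_smul_set hu, ?_⟩
  obtain rfl : b = 1 - a := by linear_combination hab
  module

theorem convex_self_subset_half_smul_add {S : Set E} (hS : Convex 𝕜 S) :
    S ⊆ (2⁻¹ : 𝕜) • S + (2⁻¹ : 𝕜) • S := by
  rw [← hS.add_smul (by norm_num) (by norm_num), ← two_mul, mul_inv_cancel₀ two_ne_zero, one_smul]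

theorem convexHull_union_subset_half_smul_add (A B : Set E) :
    convexHull 𝕜 (A ∪ B) ⊆
      ((2⁻¹ : 𝕜) • convexHull 𝕜 A + (2⁻¹ : 𝕜) • convexHull 𝕜 (A ∪ B)) ∪
        ((2⁻¹ : 𝕜) • convexHull 𝕜 B + (2⁻¹ : 𝕜) • convexHull 𝕜 (A ∪ B)) := by
  rcases A.eq_empty_or_nonempty with rfl | hA
  · rw [empty_union]
    exact (convex_self_subset_half_smul_add (convex_convexHull 𝕜 B)).trans subset_union_right
  rcases B.eq_empty_or_nonempty with rfl | hB
  · rw [union_empty]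
    exact (convex_self_subset_half_smul_add (convex_convexHull 𝕜 A)).trans subset_union_left
  intro p hp
  rw [convexHull_union hA hB] at hp
  obtain ⟨y, hy, z, hz, a, b, ha, hb, hab, rfl⟩ := mem_convexJoin.1 hp
  have hyz : segment 𝕜 y z ⊆ convexHull 𝕜 (A ∪ B) :=
    (convex_convexHull 𝕜 _).segment_subset (convexHull_mono subset_union_left hy)
      (convexHull_mono subset_union_right hz)
  rcases le_total 2⁻¹ a with ha' | ha'
  · exact Or.inl (smul_add_smul_mem_half_smul_add ha' hb hab hy hyz)
  · have hb' : (2⁻¹ : 𝕜) ≤ b := by linarith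
    rw [add_comm] at hab
    rw [add_comm (a • y)]
    exact Or.inr (smul_add_smul_mem_half_smul_add hb' ha hab hz (segment_symm 𝕜 y z ▸ hyz))

theorem mem_of_mem_extremePoints_of_mem_half_smul_add {S K : Set E} {x : E} (hSK : S ⊆ K)
    (hx : x ∈ K.extremePoints 𝕜) (h : x ∈ (2⁻¹ : 𝕜) • S + (2⁻¹ : 𝕜) • K) : x ∈ S := by
  obtain ⟨_, ⟨a, ha, rfl⟩, _, ⟨u, hu, rfl⟩, rfl⟩ := h
  have hmid : (2⁻¹ : 𝕜) • a + (2⁻¹ : 𝕜) • u ∈ openSegment 𝕜 a u :=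
    ⟨2⁻¹, 2⁻¹, by norm_num, by norm_num, by norm_num, rfl⟩
  exact ((mem_extremePoints.1 hx).2 a (hSK ha) u hu hmid).1 ▸ ha

end HalfSplit

section Topological

variable {𝕜 E : Type*} [Field 𝕜] [LinearOrder 𝕜] [IsStrictOrderedRing 𝕜]
  [AddCommGroup E] [Module 𝕜 E] [TopologicalSpace E]

theorem isOpenMap_smul_of_one_le [ContinuousAdd E] [LocallyConvexSpace 𝕜 E] {c : 𝕜}
    (hc : 1 ≤ c) : IsOpenMap (fun x : E => c • x) := by
  refine fun U hU => isOpen_iff_mem_nhds.2 ?_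
  rintro _ ⟨u, hu, rfl⟩
  obtain ⟨W, ⟨hWu, hWconv⟩, hWU⟩ :=
    (LocallyConvexSpace.convex_basis (𝕜 := 𝕜) u).mem_iff.1 (hU.mem_nhds hu)
  have hc0 : c ≠ 0 := (zero_lt_one.trans_le hc).ne'
  -- `(c - 1) • u + w = c • ((1 - c⁻¹) • u + c⁻¹ • w)`, and the right side lies in `c • W`
  have hsub : (c - 1) • u +ᵥ W ⊆ (fun x : E => c • x) '' U := by
    rintro _ ⟨w, hw, rfl⟩
    have hmem : (1 - c⁻¹) • u + c⁻¹ • w ∈ W :=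
      hWconv (mem_of_mem_nhds hWu) hw (sub_nonneg.2 (inv_le_one_of_one_le₀ hc))
        (inv_nonneg.2 (zero_le_one.trans hc)) (sub_add_cancel _ _)
    refine ⟨_, hWU hmem, ?_⟩
    simp only [vadd_eq_add, smul_add, smul_smul, mul_sub, mul_one, mul_inv_cancel₀ hc0, one_smul]
  refine Filter.mem_of_superset ?_ hsub
  convert (vadd_mem_nhds_vadd_iff ((c - 1) • u)).2 hWu using 2
  rw [vadd_eq_add, sub_smul, one_smul, sub_add_cancel]

theorem continuous_inv_smul_of_one_le [ContinuousAdd E] [LocallyConvexSpace 𝕜 E] {c : 𝕜}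
    (hc : 1 ≤ c) : Continuous (fun x : E => c⁻¹ • x) := by
  refine continuous_def.2 fun U hU => ?_
  rw [Set.preimage_smul_inv₀ (zero_lt_one.trans_le hc).ne', ← image_smul]
  exact isOpenMap_smul_of_one_le hc U hU

end Topological

theorem continuousConstSMul_rat {E : Type*} [AddCommGroup E] [Module ℚ E] [TopologicalSpace E]
    [IsTopologicalAddGroup E] [LocallyConvexSpace ℚ E] : ContinuousConstSMul ℚ E := by
  refine ⟨fun q => ?_⟩
  have hq : (fun x : E => q • x) = fun x => q.num • ((q.den : ℚ)⁻¹ • x) := by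
    ext x
    rw [← Int.cast_smul_eq_zsmul ℚ, smul_smul, ← div_eq_mul_inv, Rat.num_div_den]
  rw [hq]
  exact (continuous_zsmul _).comp (continuous_inv_smul_of_one_le (Nat.one_le_cast.2 q.den_pos))

theorem exists_convex_mem_nhds_notMem_closure {𝕜 E : Type*} [Semiring 𝕜] [PartialOrder 𝕜]
    [AddCommMonoid E] [Module 𝕜 E] [TopologicalSpace E] [T1Space E] [RegularSpace E]
    [LocallyConvexSpace 𝕜 E] {x c : E} (h : c ≠ x) : ∃ U ∈ 𝓝 c, Convex 𝕜 U ∧ x ∉ closure U := by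
  obtain ⟨F, hF, hFclosed, hFx⟩ := exists_mem_nhds_isClosed_subset (compl_singleton_mem_nhds h)
  obtain ⟨U, ⟨hU, hUconv⟩, hUF⟩ := (LocallyConvexSpace.convex_basis (𝕜 := 𝕜) c).mem_iff.1 hF
  exact ⟨U, hU, hUconv, fun hx => hFx (hFclosed.closure_subset_iff.2 hUF hx) rfl⟩

section Extreme

variable {𝕜 E : Type*} [Field 𝕜] [LinearOrder 𝕜] [IsStrictOrderedRing 𝕜]
  [AddCommGroup E] [Module 𝕜 E] [TopologicalSpace E] [ContinuousAdd E] [ContinuousConstSMul 𝕜 E]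
  [T2Space E]

theorem mem_closure_convexHull_or_of_mem_extremePoints_union {A B : Set E} {x : E}
    (hK : IsCompact (closure (convexHull 𝕜 (A ∪ B))))
    (hx : x ∈ (closure (convexHull 𝕜 (A ∪ B))).extremePoints 𝕜) :
    x ∈ closure (convexHull 𝕜 A) ∨ x ∈ closure (convexHull 𝕜 B) := by
  set K := closure (convexHull 𝕜 (A ∪ B))
  have hsub : ∀ {S}, S ⊆ A ∪ B → closure (convexHull 𝕜 S) ⊆ K :=
    fun h => closure_mono (convexHull_mono h)
  have hclosed : ∀ {S}, S ⊆ A ∪ B →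
      IsClosed ((2⁻¹ : 𝕜) • closure (convexHull 𝕜 S) + (2⁻¹ : 𝕜) • K) :=
    fun h => (((hK.of_isClosed_subset isClosed_closure (hsub h)).smul _).add (hK.smul _)).isClosed
  have hKsub : K ⊆ ((2⁻¹ : 𝕜) • closure (convexHull 𝕜 A) + (2⁻¹ : 𝕜) • K) ∪
      ((2⁻¹ : 𝕜) • closure (convexHull 𝕜 B) + (2⁻¹ : 𝕜) • K) := by
    refine closure_minimal ((convexHull_union_subset_half_smul_add A B).trans ?_)
      ((hclosed subset_union_left).union (hclosed subset_union_right))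
    gcongr <;> exact subset_closure
  rcases hKsub hx.1 with h | h
  · exact Or.inl (mem_of_mem_extremePoints_of_mem_half_smul_add (hsub subset_union_left) hx h)
  · exact Or.inr (mem_of_mem_extremePoints_of_mem_half_smul_add (hsub subset_union_right) hx h)

theorem exists_mem_closure_convexHull_of_mem_extremePoints_biUnion {ι : Type*}
    (A : ι → Set E) (s : Finset ι) {x : E}
    (hK : IsCompact (closure (convexHull 𝕜 (⋃ i ∈ s, A i))))
    (hx : x ∈ (closure (convexHull 𝕜 (⋃ i ∈ s, A i))).extremePoints 𝕜) :
    ∃ i ∈ s, x ∈ closure (convexHull 𝕜 (A i)) := by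
  classical
  induction s using Finset.induction_on with
  | empty => simp at hx
  | insert i s _ ih =>
    rw [Finset.set_biUnion_insert] at hK hx
    rcases mem_closure_convexHull_or_of_mem_extremePoints_union hK hx with h | h
    · exact ⟨i, s.mem_insert_self i, h⟩
    · have hsub : closure (convexHull 𝕜 (⋃ j ∈ s, A j)) ⊆
          closure (convexHull 𝕜 (A i ∪ ⋃ j ∈ s, A j)) :=
        closure_mono (convexHull_mono subset_union_right)
      obtain ⟨j, hj, hxj⟩ := ih (hK.of_isClosed_subset isClosed_closure hsub)
        (inter_extremePoints_subset_extremePoints_of_subset hsub ⟨h, hx⟩)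
      exact ⟨j, Finset.mem_insert_of_mem hj, hxj⟩

theorem extremePoints_closure_convexHull_subset [RegularSpace E] [LocallyConvexSpace 𝕜 E]
    {C : Set E} (hC : IsCompact C) (hK : IsCompact (closure (convexHull 𝕜 C))) :
    (closure (convexHull 𝕜 C)).extremePoints 𝕜 ⊆ C := by
  intro x hx
  by_contra hxC
  choose! U hU hUconv hxU using fun c (hc : c ∈ C) =>
    exists_convex_mem_nhds_notMem_closure (𝕜 := 𝕜) (ne_of_mem_of_not_mem hc hxC)
  obtain ⟨t, htC, hCt⟩ := hC.elim_nhds_subcover U hU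
  have hC_eq : ⋃ c ∈ t, C ∩ U c = C := by rw [← inter_iUnion₂, inter_eq_left.2 hCt]
  rw [← hC_eq] at hK hx
  obtain ⟨c, hct, hxc⟩ := exists_mem_closure_convexHull_of_mem_extremePoints_biUnion _ t hK hx
  exact hxU c (htC c hct)
    (closure_mono (convexHull_min inter_subset_right (hUconv c (htC c hct))) hxc)

end Extreme

theorem isUnit_intCast_of_bijective_nsmul {X : Type*} [AddCommGroup X]
    (hud : ∀ n : ℕ, 0 < n → Function.Bijective (fun x : X => n • x)) {y : ℤ} (hy : y ≠ 0) :
    IsUnit (y : Module.End ℤ X) := by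
  obtain ⟨n, rfl | rfl⟩ := Int.eq_nat_or_neg y <;>
  · have hn : IsUnit (n : Module.End ℤ X) := (Module.End.isUnit_iff _).2 <| by
      convert hud n (by omega); exact Module.End.natCast_apply _ _
    simpa using hn

noncomputable abbrev ratModuleOfBijective {X : Type*} [AddCommGroup X]
    (hud : ∀ n : ℕ, 0 < n → Function.Bijective (fun x : X => n • x)) : Module ℚ X :=
  haveI : IsLocalizedModule (nonZeroDivisors ℤ) (LinearMap.id : X →ₗ[ℤ] X) :=
    { map_units := fun y => by
        rw [algebraMap_int_eq, eq_intCast]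
        exact isUnit_intCast_of_bijective_nsmul hud (nonZeroDivisors.ne_zero y.2)
      surj := fun x => ⟨(x, 1), one_smul _ _⟩
      exists_of_eq := fun h => ⟨1, congr_arg _ h⟩ }
  IsLocalizedModule.module (nonZeroDivisors ℤ) (A := ℚ) LinearMap.id

theorem MConvex.mem_of_add_nsmul_eq {E : Type*} [AddCommMonoid E] {S : Set E} (hS : MConvex S)
    {p q : ℕ} (hp : 0 < p) (hq : 0 < q) {x y z : E} (hx : x ∈ S) (hy : y ∈ S)
    (h : (p + q) • z = p • x + q • y) : z ∈ S :=
  hS 2 two_pos z ![x, y] ![p, q] (fun i => by fin_cases i <;> assumption)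
    (fun i => by fin_cases i <;> assumption) (by simpa [Fin.sum_univ_two] using h)

theorem Rat.exists_nat_eq_mul_of_add_eq_one {a b : ℚ} (ha : 0 < a) (hb : 0 < b)
    (hab : a + b = 1) : ∃ p q : ℕ, 0 < p ∧ 0 < q ∧ (p + q : ℚ) * a = p ∧ (p + q : ℚ) * b = q := by
  have hnum : 0 < a.num := Rat.num_pos.2 ha
  have hlt : a.num < a.den := Rat.num_lt_denom_iff.2 (by linarith)
  have hp : ((a.num.toNat : ℕ) : ℚ) = a.den * a := by
    rw [mul_comm, Rat.mul_den_eq_num]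
    exact_mod_cast Int.toNat_of_nonneg hnum.le
  have hp_lt : a.num.toNat < a.den := by omega
  have hpq : a.num.toNat + (a.den - a.num.toNat) = a.den := by omega
  refine ⟨a.num.toNat, a.den - a.num.toNat, by omega, by omega, ?_, ?_⟩
  · rw [← Nat.cast_add, hpq, hp]
  · rw [← Nat.cast_add, hpq, Nat.cast_sub hp_lt.le, hp, show b = 1 - a by linarith]
    ring

section RatModule

variable {E : Type*} [AddCommGroup E] [Module ℚ E]

theorem exists_nsmul_smul_add_smul_eq {a b : ℚ} (ha : 0 < a) (hb : 0 < b) (hab : a + b = 1) :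
    ∃ p q : ℕ, 0 < p ∧ 0 < q ∧ ∀ x y : E, (p + q) • (a • x + b • y) = p • x + q • y := by
  obtain ⟨p, q, hp, hq, hpa, hqb⟩ := Rat.exists_nat_eq_mul_of_add_eq_one ha hb hab
  refine ⟨p, q, hp, hq, fun x y => ?_⟩
  rw [← Nat.cast_smul_eq_nsmul ℚ, smul_add, smul_smul, smul_smul, Nat.cast_add, hpa, hqb,
    Nat.cast_smul_eq_nsmul, Nat.cast_smul_eq_nsmul]

theorem mconvex_iff_convex {S : Set E} : MConvex S ↔ Convex ℚ S := by
  refine ⟨fun hS => convex_iff_forall_pos.2 fun x hx y hy a b ha hb hab => ?_, fun hS => ?_⟩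
  · obtain ⟨p, q, hp, hq, h⟩ := exists_nsmul_smul_add_smul_eq (E := E) ha hb hab
    exact hS.mem_of_add_nsmul_eq hp hq hx hy (h x y)
  intro n hn z xs ms hxs hms hsum
  have hm : (0 : ℚ) < (∑ i, ms i : ℕ) := by
    exact_mod_cast Finset.sum_pos (fun i _ => hms i) ⟨⟨0, hn⟩, Finset.mem_univ _⟩
  have hz : z = ∑ i, ((ms i : ℚ) / (∑ j, ms j : ℕ)) • xs i := by
    refine smul_right_injective E hm.ne' ?_
    simp only [Finset.smul_sum, smul_smul, mul_div_cancel₀ _ hm.ne', Nat.cast_smul_eq_nsmul]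
    exact hsum
  rw [hz]
  refine hS.sum_mem (fun i _ => by positivity) ?_ (fun i _ => hxs i)
  rw [← Finset.sum_div, ← Nat.cast_sum, div_self hm.ne']

theorem mconvHull_eq_convexHull (S : Set E) : mconvHull S = convexHull ℚ S := by
  ext x
  simp only [mconvHull, mem_sInter, mem_ofPred_eq, mem_convexHull_iff, mconvex_iff_convex, and_imp]

theorem MExtreme.mem_extremePoints {A : Set E} {x : E} (h : MExtreme A x) :
    x ∈ A.extremePoints ℚ := by
  refine _root_.mem_extremePoints.2 ⟨h.1, fun x₁ h₁ x₂ h₂ ⟨a, b, ha, hb, hab, hx⟩ => ?_⟩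
  obtain ⟨p, q, hp, hq, hpq⟩ := exists_nsmul_smul_add_smul_eq (E := E) ha hb hab
  have := h.2 2 two_pos ![x₁, x₂] ![p, q] (fun i => by fin_cases i <;> assumption)
    (fun i => by fin_cases i <;> assumption) (by simpa [Fin.sum_univ_two, ← hx] using hpq x₁ x₂)
  exact ⟨this 0, this 1⟩

theorem LocallyMConvex.locallyConvexSpace [TopologicalSpace E] (h : LocallyMConvex E) :
    LocallyConvexSpace ℚ E := by
  obtain ⟨B, hB, hBconv⟩ := h
  exact LocallyConvexSpace.ofBases ℚ E (fun _ s => s) (fun x s => s ∈ B ∧ x ∈ s)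
    (fun _ => hB.nhds_hasBasis) (fun _ s hs => mconvex_iff_convex.1 (hBconv s hs.1))

end RatModule

theorem milman_converse_for_groups_general
    {X : Type*} [AddCommGroup X] [TopologicalSpace X] [IsTopologicalAddGroup X]
    [T2Space X]
    (hud : ∀ n : ℕ, 0 < n → Function.Bijective (fun x : X => n • x))
    (hlc : LocallyMConvex X)
    {C : Set X} (hcomp : IsCompact C)
    (hcch : IsCompact (closure (mconvHull C))) :
    {x : X | MExtreme (closure (mconvHull C)) x} ⊆ C := by
  let : Module ℚ X := ratModuleOfBijective hud
  have : LocallyConvexSpace ℚ X := hlc.locallyConvexSpace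
  have : ContinuousConstSMul ℚ X := continuousConstSMul_rat
  rw [mconvHull_eq_convexHull] at hcch ⊢
  exact fun x hx => extremePoints_closure_convexHull_subset hcomp hcch hx.mem_extremePoints

theorem milman_converse_for_groups
    {X : Type*} [AddCommGroup X] [TopologicalSpace X] [IsTopologicalAddGroup X]
    [ConnectedSpace X] [T2Space X]
    (hud : ∀ n : ℕ, 0 < n → Function.Bijective (fun x : X => n • x))
    (hlc : LocallyMConvex X)
    {C : Set X} (hcomp : IsCompact C)
    (hcch : IsCompact (closure (mconvHull C))) :
    {x : X | MExtreme (closure (mconvHull C)) x} ⊆ C :=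
  milman_converse_for_groups_general hud hlc hcomp hcch
end

section
/- Let p be a prime and let X be a p-semidivisible topological additive commutative monoid such that for every x, y ∈ X the convex hull conv({x, y}) has compact closure. If f : X → ℝ ∪ {−∞} is convex and lower semicontinuous, then f is convex-like: for all x, y ∈ X and every μ ∈ [0,1] there exists z ∈ X with f(z) ≤ μ·f(x) + (1−μ)·f(y). -/
/-- A function `f : X → ℝ ∪ {-∞}` on an additive commutative monoid is convex if whenever
`m • x = m₁ • x₁ + ⋯ + mₙ • xₙ` with positive integers `mᵢ` and `m = m₁ + ⋯ + mₙ`,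
then `m * f x ≤ m₁ * f x₁ + ⋯ + mₙ * f xₙ`. -/
def MConvexFunE {X : Type*} [AddCommMonoid X] (f : X → EReal) : Prop :=
  ∀ (n : ℕ), 0 < n → ∀ (x : X) (xs : Fin n → X) (ms : Fin n → ℕ),
    (∀ i, 0 < ms i) → (∑ i, ms i) • x = ∑ i, ms i • xs i →
    (((∑ i, ms i : ℕ) : ℝ) : EReal) * f x ≤ ∑ i, (((ms i : ℕ) : ℝ) : EReal) * f (xs i)

/-!
Since `X` is `p`-semidivisible, `a • x + b • y = p ^ k • z` is solvable whenever `a + b = p ^ k`,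
and convexity gives `p ^ k * f z ≤ a * f x + b * f y` with `z ∈ conv {x, y}`. The lower
semicontinuous `f` attains its minimum on the compact closure of `conv {x, y}` at some `w`, so
`f w` satisfies all these inequalities; the weights `a / p ^ k` are dense in `[0, 1]`, which
yields `f w ≤ μ * f x + (1 - μ) * f y`.
-/

open Filter Topology

section MonoidConvexity

variable {X : Type*} [AddCommMonoid X]

lemma subset_mconvHull (A : Set X) : A ⊆ mconvHull A :=
  fun _ hx => Set.mem_sInter.2 fun _ hC => hC.1 hx

lemma mconvex_mconvHull (A : Set X) : MConvex (mconvHull A) :=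
  fun n hn x xs ms hxs hms hsum => Set.mem_sInter.2 fun C hC =>
    hC.2 n hn x xs ms (fun i => Set.mem_sInter.1 (hxs i) C hC) hms hsum

lemma MConvex.mem_of_add_smul_eq {C : Set X} (hC : MConvex C) {x y z : X} (hx : x ∈ C)
    (hy : y ∈ C) {a b : ℕ} (ha : 0 < a) (hb : 0 < b) (h : (a + b) • z = a • x + b • y) :
    z ∈ C := by
  refine hC 2 two_pos z ![x, y] ![a, b] ?_ ?_ (by simpa [Fin.sum_univ_two] using h)
  · simp [Fin.forall_fin_two, hx, hy]
  · simp [Fin.forall_fin_two, ha, hb]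

lemma MConvexFunE.le_of_add_smul_eq {f : X → EReal} (hf : MConvexFunE f) {x y z : X}
    {a b : ℕ} (ha : 0 < a) (hb : 0 < b) (h : (a + b) • z = a • x + b • y) :
    (((a + b : ℕ) : ℝ) : EReal) * f z ≤ (a : ℝ) * f x + (b : ℝ) * f y := by
  simpa [Fin.sum_univ_two] using
    hf 2 two_pos z ![x, y] ![a, b] (by simp [Fin.forall_fin_two, ha, hb])
      (by simpa [Fin.sum_univ_two] using h)

lemma exists_eq_pow_smul {p : ℕ} (hdiv : ∀ x : X, ∃ y, x = p • y) (k : ℕ) (x : X) :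
    ∃ y, x = p ^ k • y := by
  induction k generalizing x with
  | zero => exact ⟨x, by simp⟩
  | succ k ih =>
    obtain ⟨y, rfl⟩ := hdiv x
    obtain ⟨z, rfl⟩ := ih y
    exact ⟨z, by rw [← mul_smul, ← pow_succ']⟩

lemma MConvexFunE.exists_mem_mconvHull_le {f : X → EReal} (hf : MConvexFunE f) {p : ℕ}
    (hdiv : ∀ x : X, ∃ y, x = p • y) (x y : X) {k a b : ℕ} (ha : 0 < a) (hb : 0 < b)
    (hab : a + b = p ^ k) :
    ∃ z ∈ mconvHull {x, y}, (((a + b : ℕ) : ℝ) : EReal) * f z ≤ (a : ℝ) * f x + (b : ℝ) * f y := by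
  obtain ⟨z, hz⟩ := exists_eq_pow_smul hdiv k (a • x + b • y)
  have h : (a + b) • z = a • x + b • y := by rw [hab, hz]
  exact ⟨z, (mconvex_mconvHull _).mem_of_add_smul_eq (subset_mconvHull _ (by simp))
    (subset_mconvHull _ (by simp)) ha hb h, hf.le_of_add_smul_eq ha hb h⟩

end MonoidConvexity

lemma Real.le_add_mul_of_forall_pow_weights {p : ℕ} (hp : 1 < p) {t r s μ : ℝ} (hμ0 : 0 < μ)
    (hμ1 : μ < 1)
    (h : ∀ k a b : ℕ, 0 < a → 0 < b → a + b = p ^ k → ((a + b : ℕ) : ℝ) * t ≤ a * r + b * s) :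
    t ≤ μ * r + (1 - μ) * s := by
  have hpow : Tendsto (fun k : ℕ => (p : ℝ) ^ k) atTop atTop :=
    tendsto_pow_atTop_atTop_of_one_lt (by exact_mod_cast hp)
  have hclosed : IsClosed {α : ℝ | t ≤ α * r + (1 - α) * s} :=
    isClosed_le continuous_const (by fun_prop)
  refine hclosed.mem_of_tendsto ((tendsto_nat_floor_mul_div_atTop hμ0.le).comp hpow) ?_
  filter_upwards [hpow.eventually_ge_atTop μ⁻¹] with k hk
  set a := ⌊μ * (p : ℝ) ^ k⌋₊
  have hP : (0 : ℝ) < (p : ℝ) ^ k := by positivity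
  have ha : 0 < a := Nat.floor_pos.2 (by rwa [inv_le_iff_one_le_mul₀' hμ0] at hk)
  have hap : a < p ^ k := by
    have : (a : ℝ) < (p : ℝ) ^ k :=
      (Nat.floor_le (by positivity)).trans_lt (mul_lt_of_lt_one_left hP hμ1)
    exact_mod_cast this
  have hw := h k a (p ^ k - a) ha (by omega) (by omega)
  rw [Nat.add_sub_cancel' hap.le, Nat.cast_sub hap.le] at hw
  push_cast at hw
  show t ≤ (a : ℝ) / (p : ℝ) ^ k * r + (1 - (a : ℝ) / (p : ℝ) ^ k) * s
  rw [one_sub_div hP.ne', div_mul_eq_mul_div, div_mul_eq_mul_div, ← add_div, le_div_iff₀ hP]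
  linarith

lemma EReal.coe_mul_ne_bot_of_nonneg {c : ℝ} (hc : 0 ≤ c) {x : EReal} (hx : x ≠ ⊥) :
    (c : EReal) * x ≠ ⊥ :=
  (EReal.mul_ne_bot _ _).2
    ⟨.inl (EReal.coe_ne_bot c), .inr hx, .inl (EReal.coe_ne_top c), .inl (EReal.coe_nonneg.2 hc)⟩

lemma EReal.le_add_mul_of_forall_pow_weights {p : ℕ} (hp : 1 < p) {m u v : EReal} {μ : ℝ}
    (hμ0 : 0 ≤ μ) (hμ1 : μ ≤ 1) (hu : m ≤ u) (hv : m ≤ v)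
    (h : ∀ k a b : ℕ, 0 < a → 0 < b → a + b = p ^ k →
      (((a + b : ℕ) : ℝ) : EReal) * m ≤ (a : ℝ) * u + (b : ℝ) * v) :
    m ≤ μ * u + ((1 - μ : ℝ) : EReal) * v := by
  rcases hμ0.eq_or_lt with rfl | hμ0
  · simpa using hv
  rcases hμ1.eq_or_lt with rfl | hμ1
  · simpa using hu
  rcases eq_bot_or_bot_lt m with rfl | hm
  · exact bot_le
  have hu_bot : u ≠ ⊥ := (hm.trans_le hu).ne'
  have hv_bot : v ≠ ⊥ := (hm.trans_le hv).ne'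
  by_cases hu_top : u = ⊤
  · rw [hu_top, EReal.coe_mul_top_of_pos hμ0, EReal.top_add_of_ne_bot]
    · exact le_top
    · exact EReal.coe_mul_ne_bot_of_nonneg (by linarith) hv_bot
  by_cases hv_top : v = ⊤
  · rw [hv_top, EReal.coe_mul_top_of_pos (by linarith), EReal.add_top_of_ne_bot]
    · exact le_top
    · exact EReal.coe_mul_ne_bot_of_nonneg hμ0.le hu_bot
  lift u to ℝ using ⟨hu_top, hu_bot⟩ with r
  lift v to ℝ using ⟨hv_top, hv_bot⟩ with s
  lift m to ℝ using ⟨(hu.trans_lt (EReal.coe_lt_top r)).ne, hm.ne'⟩ with t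
  exact_mod_cast Real.le_add_mul_of_forall_pow_weights hp hμ0 hμ1 fun k a b ha hb hab => by
    exact_mod_cast h k a b ha hb hab

theorem convex_lsc_implies_convexLike_general
    {X : Type*} [AddCommMonoid X] [TopologicalSpace X]
    {p : ℕ} (hp : p.Prime) (hdiv : ∀ x : X, ∃ y : X, x = p • y)
    (hcomp : ∀ x y : X, IsCompact (closure (mconvHull ({x, y} : Set X))))
    (f : X → EReal)
    (hconv : MConvexFunE f) (hlsc : LowerSemicontinuous f) :
    ∀ x y : X, ∀ μ : ℝ, 0 ≤ μ → μ ≤ 1 →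
      ∃ z : X, f z ≤ (μ : EReal) * f x + ((1 - μ : ℝ) : EReal) * f y := by
  intro x y μ hμ0 hμ1
  have hx : x ∈ closure (mconvHull {x, y}) := subset_closure (subset_mconvHull _ (by simp))
  have hy : y ∈ closure (mconvHull {x, y}) := subset_closure (subset_mconvHull _ (by simp))
  obtain ⟨w, -, hw⟩ := (hlsc.lowerSemicontinuousOn _).exists_isMinOn ⟨x, hx⟩ (hcomp x y)
  refine ⟨w, EReal.le_add_mul_of_forall_pow_weights hp.one_lt hμ0 hμ1 (hw hx) (hw hy)
    fun k a b ha hb hab => ?_⟩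
  obtain ⟨z, hz, hfz⟩ := hconv.exists_mem_mconvHull_le hdiv x y ha hb hab
  exact (mul_le_mul_of_nonneg_left (hw (subset_closure hz)) (by positivity)).trans hfz

theorem convex_lsc_implies_convexLike
    {X : Type*} [AddCommMonoid X] [TopologicalSpace X] [ContinuousAdd X]
    {p : ℕ} (hp : p.Prime) (hdiv : ∀ x : X, ∃ y : X, x = p • y)
    (hcomp : ∀ x y : X, IsCompact (closure (mconvHull ({x, y} : Set X))))
    (f : X → EReal) (hftop : ∀ x : X, f x ≠ ⊤)
    (hconv : MConvexFunE f) (hlsc : LowerSemicontinuous f) :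
    ∀ x y : X, ∀ μ : ℝ, 0 ≤ μ → μ ≤ 1 →
      ∃ z : X, f z ≤ (μ : EReal) * f x + ((1 - μ : ℝ) : EReal) * f y :=
  convex_lsc_implies_convexLike_general hp hdiv hcomp f hconv hlsc
end
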